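/- If M is a finite module over a finite cyclic group G, then the Herbrand quotient h(M) = 1, i.e. |H_T^0(G, M)| = |H_T^{-1}(G, M)|. -/

import Mathlib

namespace Tate

variable (G : Type) [Group G] (M : Type) [AddCommGroup M] [DistribMulAction G M]

/-- Inhomogeneous (co)chain groups: functions `G^m → M`. -/
abbrev C (m : ℕ) : Type := (Fin m → G) → M

/-- The standard inhomogeneous coboundary map. -/
def dPlus (m : ℕ) : C G M m →+ C G M (m + 1) :=
  AddMonoidHom.mk' (fun f g =>
    g 0 • f (fun i => g i.succ) +
      ∑ j : Fin (m + 1), ((-1 : ℤ) ^ (j.val + 1)) • f (Fin.contractNth j (· * ·) g))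
    (fun a b => by
      funext g
      simp only [Pi.add_apply, smul_add, Finset.sum_add_distrib]
      abel)

variable [Finite G]

/-- The norm map on (co)chains. -/
noncomputable def normMap (m : ℕ) : C G M m →+ C G M m :=
  letI : Fintype G := Fintype.ofFinite G
  AddMonoidHom.mk' (fun f x => ∑ g : G, g • f x)
    (fun a b => by
      funext x
      simp only [Pi.add_apply, smul_add, Finset.sum_add_distrib])

/-- The standard inhomogeneous boundary map on chains of a finite group
(chains of a finite group are plain functions `G^m → M`). -/
noncomputable def dMinus (m : ℕ) : C G M (m + 1) →+ C G M m :=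
  letI : Fintype G := Fintype.ofFinite G
  letI := Classical.decEq G
  AddMonoidHom.mk' (fun f h =>
    (∑ g : G, g⁻¹ • f (Fin.cons g h)) +
      (∑ j : Fin m, ((-1 : ℤ) ^ (j.val + 1)) •
        ∑ g : G, f (Fin.insertNth j.castSucc g (Function.update h j (g⁻¹ * h j)))) +
      ((-1 : ℤ) ^ (m + 1)) • ∑ g : G, f (Fin.snoc h g))
    (fun a b => by
      funext x
      simp only [Pi.add_apply, smul_add, Finset.sum_add_distrib]
      abel)

/-- The size of the tuples at degree `n` of the complete standard complex. -/
def dim : ℤ → ℕ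
  | .ofNat m => m
  | .negSucc m => m

/-- Cocycles of the complete standard complex. -/
noncomputable def cocycles : ∀ n : ℤ, AddSubgroup (C G M (dim n))
  | .ofNat m => (dPlus G M m).ker
  | .negSucc 0 => (normMap G M 0).ker
  | .negSucc (m + 1) => (dMinus G M m).ker

/-- Coboundaries of the complete standard complex. -/
noncomputable def boundaries : ∀ n : ℤ, AddSubgroup (C G M (dim n))
  | .ofNat 0 => (normMap G M 0).range
  | .ofNat (m + 1) => (dPlus G M m).range
  | .negSucc m => (dMinus G M m).range

/-- Tate cohomology of a finite group `G` with coefficients in the `G`-module `M`: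
`H_T^n(G, M)` for all `n : ℤ`. -/
noncomputable def tate (n : ℤ) : Type :=
  cocycles G M n ⧸ (boundaries G M n).addSubgroupOf (cocycles G M n)

noncomputable instance (n : ℤ) : AddCommGroup (tate G M n) :=
  inferInstanceAs (AddCommGroup (_ ⧸ _))

end Tate

/-- The trivial action of a group on an abelian group. -/
def Tate.trivialAction (G M : Type) [Group G] [AddCommGroup M] : DistribMulAction G M where
  smul _ m := m
  one_smul _ := rfl
  mul_smul _ _ _ := rfl
  smul_zero _ := rfl
  smul_add _ _ _ := rfl

namespace Tate

variable (G : Type) [Group G] [Finite G] (M : Type) [AddCommGroup M] [DistribMulAction G M]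

/-- The Herbrand quotient `h(M) = |H_T^0(G,M)| / |H_T^1(G,M)|`. -/
noncomputable def herbrand : ℚ :=
  (Nat.card (tate G M 0) : ℚ) / (Nat.card (tate G M 1) : ℚ)

/-- The Herbrand quotient is defined when both `H_T^0(G,M)` and `H_T^1(G,M)` are finite. -/
def HerbrandDefined : Prop :=
  Finite (tate G M 0) ∧ Finite (tate G M 1)

end Tate

/-!
Let `σ` generate `G`. Evaluation at the empty tuple identifies `H_T^0` with `ker (σ - 1) / N M`
and `H_T^{-1}` with `ker N / (σ - 1) M`. Evaluation at `σ` identifies `H_T^1` with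
`ker N / (σ - 1) M` too: a 1-cocycle `f` is determined by `f σ`, which lies in `ker N`, and each
`m ∈ ker N` is the value at `σ` of the cocycle `σ ^ k ↦ m + σ m + ⋯ + σ ^ (k - 1) m`. For finite
`M` the two quotients have the same order, since `|ker (σ - 1)| |(σ - 1) M| = |M| = |ker N| |N M|`.
-/

namespace AddSubgroup

variable {X Y : Type} [AddCommGroup X] [AddCommGroup Y]

theorem relIndex_comap_comap_of_surjective {φ : X →+ Y} (hφ : Function.Surjective φ)
    (A B : AddSubgroup Y) : (B.comap φ).relIndex (A.comap φ) = B.relIndex A := by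
  rw [relIndex_comap, map_comap_eq_self_of_surjective hφ]

theorem relIndex_map_map_of_injOn {A B : AddSubgroup X} (hBA : B ≤ A) {φ : X →+ Y}
    (hφ : Set.InjOn φ A) : (B.map φ).relIndex (A.map φ) = B.relIndex A := by
  have hB : (B.map φ).comap φ ⊓ A = B ⊓ A := by
    ext x
    simp only [mem_inf, mem_comap, mem_map]
    refine ⟨fun ⟨⟨b, hb, hbx⟩, hx⟩ => ⟨hφ (hBA hb) hx hbx ▸ hb, hx⟩, fun ⟨hb, hx⟩ => ?_⟩
    exact ⟨⟨x, hb, rfl⟩, hx⟩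
  rw [← relIndex_comap, ← inf_relIndex_right, hB, inf_relIndex_right]

end AddSubgroup

theorem AddMonoidHom.relIndex_range_ker_comm {X : Type} [AddCommGroup X] [Finite X]
    {f g : X →+ X} (hfg : f.range ≤ g.ker) (hgf : g.range ≤ f.ker) :
    g.range.relIndex f.ker = f.range.relIndex g.ker := by
  have key : ∀ {f g : X →+ X}, g.range ≤ f.ker →
      g.range.relIndex f.ker * (Nat.card f.range * Nat.card g.range) = Nat.card X := by
    intro f g h
    rw [← mul_assoc, ← AddSubgroup.index_ker, AddSubgroup.relIndex_mul_index h, mul_comm,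
      AddSubgroup.card_mul_index]
  have hpos : 0 < Nat.card f.range * Nat.card g.range := Nat.mul_pos Nat.card_pos Nat.card_pos
  refine Nat.eq_of_mul_eq_mul_right hpos ((key hgf).trans ?_)
  rw [← key hfg, mul_comm (Nat.card g.range)]

theorem Fin.eq_const_of_apply_zero {α : Type*} {u : Fin 1 → α} {a : α} (h : u 0 = a) :
    u = fun _ => a :=
  funext fun i => Subsingleton.elim i 0 ▸ h

namespace Tate

variable {G : Type} [Group G] {M : Type} [AddCommGroup M] [DistribMulAction G M]

def smulSubHom (M : Type) [AddCommGroup M] [DistribMulAction G M] (σ : G) : M →+ M :=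
  DistribSMul.toAddMonoidHom M σ - AddMonoidHom.id M

@[simp]
theorem smulSubHom_apply (σ : G) (m : M) : smulSubHom M σ m = σ • m - m := rfl

noncomputable def normHom (G : Type) [Group G] [Finite G] (M : Type) [AddCommGroup M]
    [DistribMulAction G M] : M →+ M :=
  letI : Fintype G := Fintype.ofFinite G
  AddMonoidHom.mk' (fun m => ∑ g : G, g • m) fun a b => by
    simp only [smul_add, Finset.sum_add_distrib]

theorem normHom_apply [Fintype G] (m : M) : normHom G M m = ∑ g : G, g • m := by
  have huniv : @Finset.univ G (Fintype.ofFinite G) = Finset.univ :=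
    congrArg _ (Subsingleton.elim _ _)
  simp only [normHom, AddMonoidHom.mk'_apply, huniv]

def constCochain (G M : Type) [AddCommGroup M] : M ≃+ C G M 0 :=
  (AddEquiv.piUnique fun _ : Fin 0 → G => M).symm

abbrev evalOneCochain (M : Type) [AddCommGroup M] (σ : G) : C G M 1 →+ M :=
  Pi.evalAddMonoidHom (fun _ => M) fun _ => σ

section Finite

variable [Finite G]

theorem normHom_smul (g : G) (m : M) : normHom G M (g • m) = normHom G M m := by
  have := Fintype.ofFinite G
  simp only [normHom_apply, ← mul_smul]
  exact Fintype.sum_equiv (Equiv.mulRight g) _ _ fun _ => rfl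

theorem smul_normHom (g : G) (m : M) : g • normHom G M m = normHom G M m := by
  have := Fintype.ofFinite G
  simp only [normHom_apply, Finset.smul_sum, ← mul_smul]
  exact Fintype.sum_equiv (Equiv.mulLeft g) _ _ fun _ => rfl

theorem range_normHom_le_ker_smulSubHom (σ : G) :
    (normHom G M).range ≤ (smulSubHom M σ).ker := by
  rintro _ ⟨m, rfl⟩
  rw [AddMonoidHom.mem_ker, smulSubHom_apply, smul_normHom, sub_self]

theorem range_smulSubHom_le_ker_normHom (σ : G) :
    (smulSubHom M σ).range ≤ (normHom G M).ker := by
  rintro _ ⟨m, rfl⟩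
  rw [AddMonoidHom.mem_ker, smulSubHom_apply, map_sub, normHom_smul, sub_self]

theorem comap_range_normMap_zero :
    (normMap G M 0).range.comap (constCochain G M : M →+ C G M 0) = (normHom G M).range := by
  ext m
  show (fun _ => m) ∈ (normMap G M 0).range ↔ _
  constructor
  · rintro ⟨f, hf⟩
    exact ⟨f Fin.elim0, congrFun hf Fin.elim0⟩
  · rintro ⟨x, rfl⟩
    exact ⟨fun _ => x, rfl⟩

theorem comap_ker_normMap_zero :
    (normMap G M 0).ker.comap (constCochain G M : M →+ C G M 0) = (normHom G M).ker := by
  ext m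
  show normMap G M 0 (fun _ => m) = 0 ↔ normHom G M m = 0
  exact ⟨fun h => congrFun h Fin.elim0, fun h => funext fun _ => h⟩

end Finite

theorem dPlus_zero_apply (f : C G M 0) (v : Fin 1 → G) :
    dPlus G M 0 f v = v 0 • f Fin.elim0 - f Fin.elim0 := by
  simp [dPlus, sub_eq_add_neg, Subsingleton.elim _ (Fin.elim0 : Fin 0 → G)]

theorem dPlus_one_apply (f : C G M 1) (v : Fin 2 → G) :
    dPlus G M 1 f v = v 0 • f (fun _ => v 1) - f (fun _ => v 0 * v 1) + f (fun _ => v 0) := by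
  have h₀ : Fin.contractNth 0 (· * ·) v = fun _ => v 0 * v 1 := Fin.eq_const_of_apply_zero rfl
  have h₁ : Fin.contractNth 1 (· * ·) v = fun _ => v 0 := Fin.eq_const_of_apply_zero rfl
  have h₂ : (fun i : Fin 1 => v i.succ) = fun _ => v 1 := Fin.eq_const_of_apply_zero rfl
  simp [dPlus, Fin.sum_univ_succ, h₀, h₁, h₂]
  abel

theorem dMinus_zero_apply [Fintype G] (f : C G M 1) (x : Fin 0 → G) :
    dMinus G M 0 f x = ∑ g : G, (g⁻¹ • f (fun _ => g) - f (fun _ => g)) := by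
  have huniv : @Finset.univ G (Fintype.ofFinite G) = Finset.univ :=
    congrArg _ (Subsingleton.elim _ _)
  have hcons (g : G) : Fin.cons g x = fun _ => g := Fin.eq_const_of_apply_zero rfl
  have hsnoc (g : G) : Fin.snoc x g = fun _ => g := Fin.eq_const_of_apply_zero rfl
  simp only [dMinus, AddMonoidHom.mk'_apply, huniv, hcons, hsnoc, Finset.sum_sub_distrib]
  simp [sub_eq_add_neg]

theorem range_dPlus_zero_le_ker_dPlus_one : (dPlus G M 0).range ≤ (dPlus G M 1).ker := by
  rintro _ ⟨c, rfl⟩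
  ext v
  simp only [dPlus_one_apply, dPlus_zero_apply, mul_smul, smul_sub, Pi.zero_apply]
  abel

theorem map_range_dPlus_zero (σ : G) :
    (dPlus G M 0).range.map (evalOneCochain M σ) = (smulSubHom M σ).range := by
  ext m
  constructor
  · rintro ⟨_, ⟨c, rfl⟩, rfl⟩
    exact ⟨c Fin.elim0, (dPlus_zero_apply c fun _ => σ).symm⟩
  · rintro ⟨x, rfl⟩
    exact ⟨_, ⟨fun _ => x, rfl⟩, dPlus_zero_apply (fun _ => x) fun _ => σ⟩

section Cocycle

variable {f : C G M 1}

theorem cocycle_mul (hf : f ∈ (dPlus G M 1).ker) (g h : G) :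
    f (fun _ => g * h) = g • f (fun _ => h) + f (fun _ => g) := by
  have hgh := congrFun hf ![g, h]
  simp only [dPlus_one_apply, Matrix.cons_val_zero, Matrix.cons_val_one, Pi.zero_apply] at hgh
  rw [sub_add_eq_add_sub, sub_eq_zero] at hgh
  exact hgh.symm

theorem cocycle_one (hf : f ∈ (dPlus G M 1).ker) : f (fun _ => 1) = 0 := by
  simpa using cocycle_mul hf 1 1

theorem normHom_cocycle [Finite G] (hf : f ∈ (dPlus G M 1).ker) (h : G) :
    normHom G M (f fun _ => h) = 0 := by
  have := Fintype.ofFinite G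
  have hsum : ∑ g : G, f (fun _ => g * h) = ∑ g : G, f (fun _ => g) :=
    Fintype.sum_equiv (Equiv.mulRight h) _ _ fun _ => rfl
  simp only [cocycle_mul hf, Finset.sum_add_distrib] at hsum
  rw [normHom_apply]
  exact add_eq_right.mp hsum

def powSmulSum (σ : G) (m : M) (k : ℕ) : M :=
  ∑ i ∈ Finset.range k, σ ^ i • m

theorem powSmulSum_add (σ : G) (m : M) (a b : ℕ) :
    powSmulSum σ m (a + b) = powSmulSum σ m a + σ ^ a • powSmulSum σ m b := by
  simp only [powSmulSum, Finset.sum_range_add, Finset.smul_sum, pow_add, mul_smul]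

theorem cocycle_pow (hf : f ∈ (dPlus G M 1).ker) (σ : G) (k : ℕ) :
    f (fun _ => σ ^ k) = powSmulSum σ (f fun _ => σ) k := by
  induction k with
  | zero => simpa [powSmulSum] using cocycle_one hf
  | succ k ih =>
    rw [pow_succ, cocycle_mul hf, ih, powSmulSum, powSmulSum, Finset.sum_range_succ, add_comm]

end Cocycle

theorem smul_eq_self_of_generator {σ : G} (hσ : ∀ g : G, g ∈ Subgroup.zpowers σ)
    {m : M} (hm : σ • m = m) (g : G) : g • m = m :=
  Subgroup.zpowers_le.mpr (show σ ∈ MulAction.stabilizer G m from hm) (hσ g)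

theorem comap_ker_dPlus_zero {σ : G} (hσ : ∀ g : G, g ∈ Subgroup.zpowers σ) :
    (dPlus G M 0).ker.comap (constCochain G M : M →+ C G M 0) = (smulSubHom M σ).ker := by
  ext m
  show dPlus G M 0 (fun _ => m) = 0 ↔ σ • m - m = 0
  constructor
  · intro h
    simpa [dPlus_zero_apply] using congrFun h fun _ => σ
  · intro h
    ext v
    rw [dPlus_zero_apply, Pi.zero_apply, smul_eq_self_of_generator hσ (sub_eq_zero.1 h), sub_self]

section Cyclic

variable [Finite G] {σ : G}

theorem exists_pow_eq_of_generator (hσ : ∀ g : G, g ∈ Subgroup.zpowers σ) (g : G) :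
    ∃ k : ℕ, σ ^ k = g :=
  mem_powers_iff_mem_zpowers.2 (hσ g)

theorem smul_sub_self_mem_range_smulSubHom (hσ : ∀ g : G, g ∈ Subgroup.zpowers σ)
    (g : G) (m : M) : g • m - m ∈ (smulSubHom M σ).range := by
  obtain ⟨k, rfl⟩ := exists_pow_eq_of_generator hσ g
  induction k with
  | zero => simp
  | succ k ih =>
    have hk : σ ^ (k + 1) • m - m = smulSubHom M σ (σ ^ k • m) + (σ ^ k • m - m) := by
      rw [smulSubHom_apply, pow_succ', mul_smul]
      abel
    rw [hk]
    exact add_mem ⟨_, rfl⟩ ih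

theorem normHom_eq_powSmulSum_orderOf (hσ : ∀ g : G, g ∈ Subgroup.zpowers σ) (m : M) :
    normHom G M m = powSmulSum σ m (orderOf σ) := by
  classical
  have := Fintype.ofFinite G
  rw [normHom_apply, ← IsCyclic.image_range_orderOf hσ, Finset.sum_image]
  · rfl
  · exact fun i hi j hj => pow_injOn_Iio_orderOf (Finset.mem_range.1 hi) (Finset.mem_range.1 hj)

theorem powSmulSum_eq_of_pow_eq (hσ : ∀ g : G, g ∈ Subgroup.zpowers σ)
    {m : M} (hm : normHom G M m = 0) {k l : ℕ} (h : σ ^ k = σ ^ l) :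
    powSmulSum σ m k = powSmulSum σ m l := by
  have hper : Function.Periodic (powSmulSum σ m) (orderOf σ) := fun k => by
    rw [powSmulSum_add, ← normHom_eq_powSmulSum_orderOf hσ, hm, smul_zero, add_zero]
  rw [← hper.map_mod_nat k, ← hper.map_mod_nat l, pow_eq_pow_iff_modEq.mp h]

theorem cocycle_eq_of_apply_generator_eq (hσ : ∀ g : G, g ∈ Subgroup.zpowers σ)
    {f₁ f₂ : C G M 1} (hf₁ : f₁ ∈ (dPlus G M 1).ker) (hf₂ : f₂ ∈ (dPlus G M 1).ker)
    (h : f₁ (fun _ => σ) = f₂ (fun _ => σ)) : f₁ = f₂ := by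
  funext v
  obtain ⟨k, hk⟩ := exists_pow_eq_of_generator hσ (v 0)
  rw [Fin.eq_const_of_apply_zero hk.symm, cocycle_pow hf₁, cocycle_pow hf₂, h]

theorem exists_cocycle_apply_generator (hσ : ∀ g : G, g ∈ Subgroup.zpowers σ)
    {m : M} (hm : normHom G M m = 0) :
    ∃ f ∈ (dPlus G M 1).ker, f (fun _ => σ) = m := by
  choose e he using exists_pow_eq_of_generator hσ
  refine ⟨fun v => powSmulSum σ m (e (v 0)), ?_, ?_⟩
  · ext v
    have hexp : σ ^ e (v 0 * v 1) = σ ^ (e (v 0) + e (v 1)) := by rw [pow_add, he, he, he]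
    have hmul := powSmulSum_add σ m (e (v 0)) (e (v 1))
    rw [he] at hmul
    rw [dPlus_one_apply, Pi.zero_apply, powSmulSum_eq_of_pow_eq hσ hm hexp, hmul]
    abel
  · show powSmulSum σ m (e σ) = m
    rw [powSmulSum_eq_of_pow_eq hσ hm (show σ ^ e σ = σ ^ 1 by rw [he, pow_one])]
    simp [powSmulSum]

theorem comap_range_dMinus_zero (hσ : ∀ g : G, g ∈ Subgroup.zpowers σ) :
    (dMinus G M 0).range.comap (constCochain G M : M →+ C G M 0) = (smulSubHom M σ).range := by
  classical
  have := Fintype.ofFinite G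
  ext m
  show (fun _ => m) ∈ (dMinus G M 0).range ↔ _
  constructor
  · rintro ⟨f, hf⟩
    rw [← congrFun hf Fin.elim0, dMinus_zero_apply]
    exact sum_mem fun g _ => smul_sub_self_mem_range_smulSubHom hσ g⁻¹ _
  · rintro ⟨x, rfl⟩
    refine ⟨fun v => if v 0 = σ⁻¹ then x else 0, funext fun y => ?_⟩
    rw [dMinus_zero_apply, Finset.sum_eq_single σ⁻¹]
    · simp
    · intro g _ hg
      simp [hg]
    · simp

theorem map_ker_dPlus_one (hσ : ∀ g : G, g ∈ Subgroup.zpowers σ) :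
    (dPlus G M 1).ker.map (evalOneCochain M σ) = (normHom G M).ker := by
  ext m
  constructor
  · rintro ⟨f, hf, rfl⟩
    exact normHom_cocycle hf σ
  · intro hm
    exact exists_cocycle_apply_generator hσ hm

theorem card_tate_zero (hσ : ∀ g : G, g ∈ Subgroup.zpowers σ) :
    Nat.card (tate G M 0) = (normHom G M).range.relIndex (smulSubHom M σ).ker := by
  rw [← comap_ker_dPlus_zero hσ, ← comap_range_normMap_zero,
    AddSubgroup.relIndex_comap_comap_of_surjective (constCochain G M).surjective]
  rfl

theorem card_tate_neg_one (hσ : ∀ g : G, g ∈ Subgroup.zpowers σ) :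
    Nat.card (tate G M (-1)) = (smulSubHom M σ).range.relIndex (normHom G M).ker := by
  rw [← comap_ker_normMap_zero, ← comap_range_dMinus_zero hσ,
    AddSubgroup.relIndex_comap_comap_of_surjective (constCochain G M).surjective]
  rfl

theorem card_tate_one (hσ : ∀ g : G, g ∈ Subgroup.zpowers σ) :
    Nat.card (tate G M 1) = (smulSubHom M σ).range.relIndex (normHom G M).ker := by
  rw [← map_ker_dPlus_one hσ, ← map_range_dPlus_zero σ,
    AddSubgroup.relIndex_map_map_of_injOn range_dPlus_zero_le_ker_dPlus_one
      fun _ hf₁ _ hf₂ h => cocycle_eq_of_apply_generator_eq hσ hf₁ hf₂ h]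
  rfl

end Cyclic

end Tate

/-- If `M` is a finite module over a finite cyclic group `G`, then the Herbrand quotient
`h(M) = 1`, i.e. `|H_T^0(G, M)| = |H_T^{-1}(G, M)|`. -/
theorem herbrand_quotient_eq_one_of_finite (G : Type) [Group G] [Finite G] (hG : IsCyclic G)
    (M : Type) [AddCommGroup M] [DistribMulAction G M] (hM : Finite M) :
    Nat.card (Tate.tate G M 0) = Nat.card (Tate.tate G M (-1)) ∧
      Tate.herbrand G M = 1 := by
  obtain ⟨σ, hσ⟩ := hG.exists_generator
  have hcomm := AddMonoidHom.relIndex_range_ker_comm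
    (Tate.range_smulSubHom_le_ker_normHom (M := M) σ) (Tate.range_normHom_le_ker_smulSubHom σ)
  refine ⟨by rw [Tate.card_tate_zero hσ, Tate.card_tate_neg_one hσ, hcomm], ?_⟩
  rw [Tate.herbrand, Tate.card_tate_zero hσ, Tate.card_tate_one hσ, hcomm, div_self]
  exact_mod_cast Nat.card_pos.ne'
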